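/- Let $f$ be an S-unimodal map whose critical point $c$ is recurrent ($c\in\omega(c)$) and not periodic, and write $c_t=f^t(c)$. Define the sequence of closest approach times by $q(1)=1$ and $q(n+1)=\min\{t\in\mathbb{N}: c_t\in V_{c_{q(n)}}\}$; this sequence is well defined. For every $n\ge1$ such that the set $(V_{c_{q(n-1)}}\setminus V_{c_{q(n)}})\cap\mathcal{N}\cap[0,c)$ is nonempty, its supremum $x(n)$ is attained (it is a maximum, since the points $c_{q(n)}$ are not nice), $x(n)$ is a nice point, and one has $f^i(c)\notin V_{x(n)}$ for all $1\le i<q(n)$ while $f^{q(n)}(c)\in V_{c_{q(n)}}\subset V_{x(n)}$; consequently the first return map of $V_{x(n)}$ restricted to the central domain satisfies $R_{x(n)}|_{U_{x(n)}}=f^{q(n)}|_{U_{x(n)}}$. -/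

import Mathlib

open Set MeasureTheory Filter
open scoped Classical

noncomputable section

/-- The length (Lebesgue measure) of a set of reals, as a real number. -/
def len (S : Set ℝ) : ℝ := (volume S).toReal

/-- `J` contains a `δ`-scaled neighborhood of `I`: both components of `J \ I`
(the parts of `J` to the left and to the right of `I`) have length at least `δ * |I|`. -/
def ScaledNbhd (δ : ℝ) (I J : Set ℝ) : Prop :=
  I ⊆ J ∧ δ * len I ≤ len (J ∩ Iio (sInf I)) ∧ δ * len I ≤ len (J ∩ Ioi (sSup I))

/-- The Schwarzian derivative `Sf = f'''/f' - (3/2) (f''/f')²`. -/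
def schwarzianDeriv (f : ℝ → ℝ) (x : ℝ) : ℝ :=
  iteratedDeriv 3 f x / deriv f x - (3 / 2) * (iteratedDeriv 2 f x / deriv f x) ^ 2

/-- An S-unimodal map `f : [0,1] → [0,1]` with critical point `c`. -/
structure SUnimodal (f : ℝ → ℝ) (c : ℝ) : Prop where
  mapsTo : MapsTo f (Icc 0 1) (Icc 0 1)
  smooth : ContDiffOn ℝ 3 f (Icc 0 1)
  f_zero : f 0 = 0
  f_one : f 1 = 0
  c_mem : c ∈ Ioo (0 : ℝ) 1
  mono : StrictMonoOn f (Icc 0 c)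
  anti : StrictAntiOn f (Icc c 1)
  deriv_ne : ∀ x ∈ Icc (0 : ℝ) 1, x ≠ c → deriv f x ≠ 0
  nonflat : ∃ α : ℝ, 1 < α ∧ ∃ φ : ℝ → ℝ, ∃ U ∈ nhds c, ContDiffOn ℝ 3 φ U ∧
      φ c = 0 ∧ (∀ x ∈ U, deriv φ x ≠ 0) ∧ ∀ x ∈ U, f x = f c - |φ x| ^ α
  neg_schwarzian : ∀ x ∈ Icc (0 : ℝ) 1, x ≠ c → schwarzianDeriv f x < 0

/-- The point `τ(x)` on the opposite side of the critical point `c` with `f (τ x) = f x`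
(defaults to `x` itself when no such point exists). -/
def tauPt (f : ℝ → ℝ) (c x : ℝ) : ℝ :=
  if h : ∃ y ∈ Icc (0 : ℝ) 1, ((x < c ∧ c < y) ∨ (y < c ∧ c < x)) ∧ f y = f x then
    h.choose
  else x

/-- The open interval `V x` with endpoints `x` and `τ x`. -/
def Vv (f : ℝ → ℝ) (c x : ℝ) : Set ℝ :=
  Ioo (min x (tauPt f c x)) (max x (tauPt f c x))

/-- The set of nice points: `x ≠ c` such that `f^[n] x ∉ V x` for all `n ≥ 1`. -/
def NiceSet (f : ℝ → ℝ) (c : ℝ) : Set ℝ :=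
  {x | x ∈ Icc (0 : ℝ) 1 ∧ x ≠ c ∧ ∀ n : ℕ, 1 ≤ n → f^[n] x ∉ Vv f c x}

/-- The first time `k ≥ 1` at which the orbit of `y` enters `V x`
(first entry time / first return time). -/
def firstTime (f : ℝ → ℝ) (c x y : ℝ) : ℕ := sInf {k : ℕ | 1 ≤ k ∧ f^[k] y ∈ Vv f c x}

/-- The first return map to `V x` (also the transfer map on the transfer domain). -/
def Rmap (f : ℝ → ℝ) (c x y : ℝ) : ℝ := f^[firstTime f c x y] y

/-- The domain of the first return map to `V x`. -/
def RDom (f : ℝ → ℝ) (c x : ℝ) : Set ℝ :=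
  {y | y ∈ Vv f c x ∧ ∃ r : ℕ, 1 ≤ r ∧ f^[r] y ∈ Vv f c x}

/-- The central domain `U x`: the connected component of the domain of the
first return map to `V x` that contains the critical point `c`. -/
def Uc (f : ℝ → ℝ) (c x : ℝ) : Set ℝ := connectedComponentIn (RDom f c x) c

/-- `ψ x`: the endpoint of the central domain `U x` lying in `[0, c)`. -/
def psi (f : ℝ → ℝ) (c x : ℝ) : ℝ := sInf (Uc f c x)

/-- The transfer domain `C x`: points of `[0,1]` outside `V x` whose orbit enters `V x`. -/
def Cdom (f : ℝ → ℝ) (c x : ℝ) : Set ℝ :=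
  {y | y ∈ Icc (0 : ℝ) 1 \ Vv f c x ∧ ∃ k : ℕ, 1 ≤ k ∧ f^[k] y ∈ Vv f c x}

/-- `S x`: the connected component of the transfer domain `C x` containing the
critical value `f c`. -/
def Scomp (f : ℝ → ℝ) (c x : ℝ) : Set ℝ := connectedComponentIn (Cdom f c x) (f c)

/-- `I` is a connected component of the transfer domain `C x` with transfer time `n`. -/
def IsTransferComponent (f : ℝ → ℝ) (c x : ℝ) (I : Set ℝ) (n : ℕ) : Prop :=
  (∃ y ∈ Cdom f c x, I = connectedComponentIn (Cdom f c x) y) ∧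
  ∀ z ∈ I, firstTime f c x z = n

/-- `g` is monotone (increasing or decreasing) on `T`. -/
def MonoOrAnti (g : ℝ → ℝ) (T : Set ℝ) : Prop := MonotoneOn g T ∨ AntitoneOn g T

/-- `T` is the maximal interval containing `I` on which `g` is monotone. -/
def MaximalMonoExt (g : ℝ → ℝ) (I T : Set ℝ) : Prop :=
  I ⊆ T ∧ T.OrdConnected ∧ T ⊆ Icc 0 1 ∧ MonoOrAnti g T ∧
  ∀ T' : Set ℝ, T ⊆ T' → T'.OrdConnected → T' ⊆ Icc 0 1 → MonoOrAnti g T' → T' = T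

/-- The set `D` accumulates at the point `c`. -/
def AccumulatesAt (D : Set ℝ) (c : ℝ) : Prop :=
  ∀ ε > 0, ∃ x ∈ D, x ≠ c ∧ |x - c| < ε

/-- `f` has a periodic attractor: a periodic orbit whose basin of attraction
contains an open set. -/
def HasPeriodicAttractor (f : ℝ → ℝ) : Prop :=
  ∃ p ∈ Icc (0 : ℝ) 1, ∃ m : ℕ, 1 ≤ m ∧ f^[m] p = p ∧
    ∃ O : Set ℝ, IsOpen O ∧ O.Nonempty ∧ O ⊆ Icc 0 1 ∧
      ∀ y ∈ O, Tendsto (fun n => f^[n * m] y) atTop (nhds p)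

/-- The critical point `c` is recurrent: `c ∈ ω(c)`. -/
def RecurrentPt (f : ℝ → ℝ) (c : ℝ) : Prop :=
  ∀ ε > 0, ∃ n : ℕ, 1 ≤ n ∧ |f^[n] c - c| < ε

/-- `D ⊆ 𝒩` and `K` witness the Weak-Markov-Property of `f`: `D` is a set of nice
points accumulating at `c` and there is a full measure set `G ⊆ [0,1]` such that
every `x ∈ G` can be mapped, inside an interval `I ∋ x`, diffeomorphically onto `V y`
by some iterate `f^t`, with distortion bounded by `K`, for every `y ∈ D`. -/
def WMPwitness (f : ℝ → ℝ) (c : ℝ) (D : Set ℝ) (K : ℝ) : Prop :=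
  D ⊆ NiceSet f c ∧ AccumulatesAt D c ∧
  ∃ G : Set ℝ, G ⊆ Icc 0 1 ∧ volume (Icc (0 : ℝ) 1 \ G) = 0 ∧
    ∀ x ∈ G, ∀ y ∈ D, ∃ t : ℕ, ∃ I : Set ℝ, x ∈ I ∧ I.OrdConnected ∧
      InjOn (f^[t]) I ∧ f^[t] '' I = Vv f c y ∧ (∀ z ∈ I, deriv (f^[t]) z ≠ 0) ∧
      ∀ u ∈ I, ∀ v ∈ I, |deriv (f^[t]) u| ≤ K * |deriv (f^[t]) v|

/-- `J` is a restrictive (renormalization) interval of period `n` for `f`. -/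
def IsRestrictive (f : ℝ → ℝ) (c : ℝ) (n : ℕ) (J : Set ℝ) : Prop :=
  2 ≤ n ∧ c ∈ J ∧ J.OrdConnected ∧ J ⊆ Icc 0 1 ∧ J ≠ Icc 0 1 ∧
  (interior J).Nonempty ∧ f^[n] '' J ⊆ J ∧
  ∀ i < n, ∀ j < n, i ≠ j → interior (f^[i] '' J) ∩ interior (f^[j] '' J) = ∅

/-- `f` is only finitely renormalizable. -/
def OnlyFinitelyRenormalizable (f : ℝ → ℝ) (c : ℝ) : Prop :=
  {n : ℕ | ∃ J : Set ℝ, IsRestrictive f c n J}.Finite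

/-- The interval spanned by a set of reals. -/
def hullInt (S : Set ℝ) : Set ℝ := Icc (sInf S) (sSup S)

end

/-! For `x ∈ [0,1]` other than `c` one has `V x = {z ∈ [0,1] | f x < f z}`, so `V x` shrinks as
`f x` grows and whether `x` is nice depends only on `f x`. Recurrence of the non-periodic point `c`
makes the critical orbit enter every neighbourhood of `c` at arbitrarily late times, so the points
`c_t` are never nice. On `[0, c)` the map `f` is increasing, hence `V y ⊇ V x` for `y ≤ x < c`;
together with continuity of the iterates this makes niceness survive passing to the supremum of a
set of nice points in `[0, c)`, and the open set `V (c_(q n))` cannot contain that supremum either.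
So `x = sSup A` lies in `A`, and `V (c_(q n)) ⊆ V x ⊆ V (c_(q (n-1)))` turns the minimality of
`q n` into the first entry time of `c` into `V x`. Finally the return time is constant on each
component of the return domain of a nice point `x`: if it jumped from `k` to a larger value, by the
intermediate value theorem some point between would be mapped by `f^[k]` to `∂V x`, whose orbit
never enters `V x`, and that point would have a smaller return time; descend. -/

open Function Topology

theorem isOpen_Vv {f : ℝ → ℝ} {c x : ℝ} : IsOpen (Vv f c x) :=
  isOpen_Ioo

namespace SUnimodal

variable {f : ℝ → ℝ} {c : ℝ}

theorem c_mem_Icc (hf : SUnimodal f c) : c ∈ Icc (0 : ℝ) 1 :=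
  Ioo_subset_Icc_self hf.c_mem

theorem iterate_mem_Icc (hf : SUnimodal f c) (k : ℕ) : f^[k] c ∈ Icc (0 : ℝ) 1 :=
  hf.mapsTo.iterate k hf.c_mem_Icc

theorem iterate_continuousOn (hf : SUnimodal f c) (k : ℕ) : ContinuousOn f^[k] (Icc 0 1) :=
  hf.smooth.continuousOn.iterate hf.mapsTo k

theorem apply_lt_apply_c (hf : SUnimodal f c) {x : ℝ} (hx : x ∈ Icc (0 : ℝ) 1) (hxc : x ≠ c) :
    f x < f c := by
  rcases hxc.lt_or_gt with h | h
  · exact hf.mono ⟨hx.1, h.le⟩ ⟨hx.1.trans h.le, le_rfl⟩ h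
  · exact hf.anti ⟨le_rfl, h.le.trans hx.2⟩ ⟨h.le, hx.2⟩ h

theorem exists_opposite (hf : SUnimodal f c) {x : ℝ} (hx : x ∈ Icc (0 : ℝ) 1) (hxc : x ≠ c) :
    ∃ y ∈ Icc (0 : ℝ) 1, ((x < c ∧ c < y) ∨ (y < c ∧ c < x)) ∧ f y = f x := by
  have hc := hf.c_mem
  have hfx : f x < f c := hf.apply_lt_apply_c hx hxc
  have hfx0 : 0 ≤ f x := (hf.mapsTo hx).1
  have hyc {y : ℝ} (hfy : f y = f x) : y ≠ c := fun h => hfx.ne (h ▸ hfy).symm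
  rcases hxc.lt_or_gt with h | h
  · obtain ⟨y, hy, hfy⟩ := intermediate_value_Icc' hc.2.le
      (hf.smooth.continuousOn.mono (Icc_subset_Icc hc.1.le le_rfl))
      (show f x ∈ Icc (f 1) (f c) by rw [hf.f_one]; exact ⟨hfx0, hfx.le⟩)
    exact ⟨y, ⟨hc.1.le.trans hy.1, hy.2⟩, Or.inl ⟨h, hy.1.lt_of_ne' (hyc hfy)⟩, hfy⟩
  · obtain ⟨y, hy, hfy⟩ := intermediate_value_Icc hc.1.le
      (hf.smooth.continuousOn.mono (Icc_subset_Icc le_rfl hc.2.le))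
      (show f x ∈ Icc (f 0) (f c) by rw [hf.f_zero]; exact ⟨hfx0, hfx.le⟩)
    exact ⟨y, ⟨hy.1, hy.2.trans hc.2.le⟩, Or.inr ⟨hy.2.lt_of_ne (hyc hfy), h⟩, hfy⟩

theorem tauPt_spec (hf : SUnimodal f c) {x : ℝ} (hx : x ∈ Icc (0 : ℝ) 1) (hxc : x ≠ c) :
    tauPt f c x ∈ Icc (0 : ℝ) 1 ∧
      ((x < c ∧ c < tauPt f c x) ∨ (tauPt f c x < c ∧ c < x)) ∧ f (tauPt f c x) = f x := by
  have h := hf.exists_opposite hx hxc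
  rw [tauPt, dif_pos h]
  exact h.choose_spec

theorem Ioo_eq_sep (hf : SUnimodal f c) {a b : ℝ} (ha : a ∈ Icc (0 : ℝ) 1)
    (hb : b ∈ Icc (0 : ℝ) 1) (hac : a < c) (hcb : c < b) (hab : f a = f b) :
    Ioo a b = {z ∈ Icc (0 : ℝ) 1 | f a < f z} := by
  ext z
  constructor
  · rintro ⟨haz, hzb⟩
    refine ⟨⟨ha.1.trans haz.le, hzb.le.trans hb.2⟩, ?_⟩
    rcases le_total z c with hzc | hzc
    · exact hf.mono ⟨ha.1, hac.le⟩ ⟨ha.1.trans haz.le, hzc⟩ haz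
    · rw [hab]
      exact hf.anti ⟨hzc, hzb.le.trans hb.2⟩ ⟨hcb.le, hb.2⟩ hzb
  · rintro ⟨hz, hfz⟩
    constructor
    · by_contra! hza
      exact (hf.mono.monotoneOn ⟨hz.1, hza.trans hac.le⟩ ⟨ha.1, hac.le⟩ hza).not_gt hfz
    · by_contra! hbz
      rw [hab] at hfz
      exact (hf.anti.antitoneOn ⟨hcb.le, hb.2⟩ ⟨hcb.le.trans hbz, hz.2⟩ hbz).not_gt hfz

theorem Vv_eq (hf : SUnimodal f c) {x : ℝ} (hx : x ∈ Icc (0 : ℝ) 1) (hxc : x ≠ c) :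
    Vv f c x = {z ∈ Icc (0 : ℝ) 1 | f x < f z} := by
  obtain ⟨ht, hside, hft⟩ := hf.tauPt_spec hx hxc
  rcases hside with ⟨h₁, h₂⟩ | ⟨h₁, h₂⟩
  · rw [Vv, min_eq_left (h₁.trans h₂).le, max_eq_right (h₁.trans h₂).le]
    exact hf.Ioo_eq_sep hx ht h₁ h₂ hft.symm
  · rw [Vv, min_eq_right (h₁.trans h₂).le, max_eq_left (h₁.trans h₂).le,
      hf.Ioo_eq_sep ht hx h₁ h₂ hft, hft]

theorem Vv_subset_Vv (hf : SUnimodal f c) {x y : ℝ} (hx : x ∈ Icc (0 : ℝ) 1) (hxc : x ≠ c)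
    (hy : y ∈ Icc (0 : ℝ) 1) (hyc : y ≠ c) (h : f x ≤ f y) : Vv f c y ⊆ Vv f c x := by
  rw [hf.Vv_eq hx hxc, hf.Vv_eq hy hyc]
  exact fun z hz => ⟨hz.1, h.trans_lt hz.2⟩

theorem Vv_mem_nhds (hf : SUnimodal f c) {x : ℝ} (hx : x ∈ Icc (0 : ℝ) 1) (hxc : x ≠ c) :
    Vv f c x ∈ 𝓝 c :=
  isOpen_Vv.mem_nhds (by rw [hf.Vv_eq hx hxc]; exact ⟨hf.c_mem_Icc, hf.apply_lt_apply_c hx hxc⟩)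

theorem mem_niceSet_of_apply_eq (hf : SUnimodal f c) {x y : ℝ} (hx : x ∈ NiceSet f c)
    (hy : y ∈ Icc (0 : ℝ) 1) (hyc : y ≠ c) (h : f y = f x) : y ∈ NiceSet f c := by
  refine ⟨hy, hyc, fun n hn => ?_⟩
  obtain ⟨n, rfl⟩ := Nat.exists_eq_add_of_le' hn
  rw [iterate_succ_apply, hf.Vv_eq hy hyc, h, ← iterate_succ_apply, ← hf.Vv_eq hx.1 hx.2.1]
  exact hx.2.2 _ hn

-- `f^[k + 1] w = f x` says that `f^[k] w` is an endpoint of `V x`.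
theorem iterate_notMem_Vv (hf : SUnimodal f c) {x w : ℝ} {k j : ℕ} (hx : x ∈ NiceSet f c)
    (hw : f^[k + 1] w = f x) (hj : k ≤ j) : f^[j] w ∉ Vv f c x := by
  obtain ⟨i, rfl⟩ := Nat.exists_eq_add_of_le hj
  rcases i with _ | i
  · rw [add_zero, hf.Vv_eq hx.1 hx.2.1]
    rintro ⟨-, h⟩
    rw [← iterate_succ_apply' f k w, hw] at h
    exact h.false
  · rw [show k + (i + 1) = i + (k + 1) by ring, iterate_add_apply, hw, ← iterate_succ_apply]
    exact hx.2.2 _ (Nat.succ_pos i)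

theorem exists_iterate_succ_eq (hf : SUnimodal f c) {x z₁ z₂ : ℝ} {k : ℕ}
    (hx : x ∈ Icc (0 : ℝ) 1) (hxc : x ≠ c) (hz : uIcc z₁ z₂ ⊆ Icc 0 1)
    (h₁ : f^[k] z₁ ∈ Vv f c x) (h₂ : f^[k] z₂ ∉ Vv f c x) :
    ∃ w ∈ uIcc z₁ z₂, f^[k + 1] w = f x := by
  rw [hf.Vv_eq hx hxc] at h₁ h₂
  have hlt : f x < f^[k + 1] z₁ := by rw [iterate_succ_apply']; exact h₁.2
  have hle : f^[k + 1] z₂ ≤ f x := by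
    rw [iterate_succ_apply']
    exact not_lt.1 fun h => h₂ ⟨hf.mapsTo.iterate k (hz right_mem_uIcc), h⟩
  exact intermediate_value_uIcc ((hf.iterate_continuousOn (k + 1)).mono hz)
    (mem_uIcc.2 (Or.inr ⟨hle, hlt.le⟩))

end SUnimodal

section FirstTime

variable {f : ℝ → ℝ} {c : ℝ}

theorem firstTime_spec {x y : ℝ} (hy : y ∈ RDom f c x) :
    1 ≤ firstTime f c x y ∧ f^[firstTime f c x y] y ∈ Vv f c x :=
  Nat.sInf_mem hy.2

theorem firstTime_le {x y : ℝ} {k : ℕ} (hk : 1 ≤ k) (hV : f^[k] y ∈ Vv f c x) :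
    firstTime f c x y ≤ k :=
  Nat.sInf_le ⟨hk, hV⟩

theorem firstTime_eq {x y : ℝ} {m : ℕ} (hm : 1 ≤ m) (hmV : f^[m] y ∈ Vv f c x)
    (hlt : ∀ i, 1 ≤ i → i < m → f^[i] y ∉ Vv f c x) : firstTime f c x y = m := by
  have hs : 1 ≤ firstTime f c x y ∧ f^[firstTime f c x y] y ∈ Vv f c x :=
    Nat.sInf_mem (s := {k | 1 ≤ k ∧ f^[k] y ∈ Vv f c x}) ⟨m, hm, hmV⟩
  exact le_antisymm (firstTime_le hm hmV) (not_lt.1 fun h => hlt _ hs.1 h hs.2)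

theorem SUnimodal.firstTime_le_of_uIcc_subset (hf : SUnimodal f c) {x : ℝ}
    (hx : x ∈ NiceSet f c) {z₁ z₂ : ℝ} (h : uIcc z₁ z₂ ⊆ RDom f c x) :
    firstTime f c x z₂ ≤ firstTime f c x z₁ := by
  induction hk : firstTime f c x z₁ using Nat.strong_induction_on generalizing z₁ z₂ with
  | _ k ih =>
  have hRI : RDom f c x ⊆ Icc 0 1 := fun z hz => (hf.Vv_eq hx.1 hx.2.1 ▸ hz.1).1
  by_contra! hlt
  have h₁ := firstTime_spec (h left_mem_uIcc)
  rw [hk] at h₁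
  have h₂ : f^[k] z₂ ∉ Vv f c x := fun hV => (firstTime_le h₁.1 hV).not_gt hlt
  obtain ⟨w, hw, hfw⟩ := hf.exists_iterate_succ_eq hx.1 hx.2.1 (h.trans hRI) h₁.2 h₂
  have hwk : firstTime f c x w < k :=
    not_le.1 fun hle => hf.iterate_notMem_Vv hx hfw hle (firstTime_spec (h hw)).2
  have := ih _ hwk ((uIcc_subset_uIcc hw left_mem_uIcc).trans h) rfl
  omega

theorem SUnimodal.firstTime_eq_of_mem_connectedComponentIn (hf : SUnimodal f c) {x y z₁ z₂ : ℝ}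
    (hx : x ∈ NiceSet f c) (hz₁ : z₁ ∈ connectedComponentIn (RDom f c x) y)
    (hz₂ : z₂ ∈ connectedComponentIn (RDom f c x) y) :
    firstTime f c x z₁ = firstTime f c x z₂ := by
  have hsub : uIcc z₁ z₂ ⊆ RDom f c x :=
    (isPreconnected_connectedComponentIn.ordConnected.uIcc_subset hz₁ hz₂).trans
      (connectedComponentIn_subset _ _)
  exact le_antisymm (hf.firstTime_le_of_uIcc_subset hx (uIcc_comm z₁ z₂ ▸ hsub))
    (hf.firstTime_le_of_uIcc_subset hx hsub)

end FirstTime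

section Recurrence

variable {f : ℝ → ℝ} {c : ℝ}

theorem RecurrentPt.exists_iterate_mem (hrec : RecurrentPt f c) {U : Set ℝ} (hU : U ∈ 𝓝 c) :
    ∃ n, 0 < n ∧ f^[n] c ∈ U := by
  obtain ⟨ε, hε, hball⟩ := Metric.mem_nhds_iff.1 hU
  obtain ⟨n, hn, hnc⟩ := hrec ε hε
  exact ⟨n, hn, hball (by rwa [Metric.mem_ball, Real.dist_eq])⟩

theorem RecurrentPt.exists_gt_iterate_mem (hrec : RecurrentPt f c)
    (hnp : ∀ n : ℕ, 1 ≤ n → f^[n] c ≠ c) (N : ℕ) {U : Set ℝ} (hU : U ∈ 𝓝 c) :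
    ∃ n, N < n ∧ f^[n] c ∈ U := by
  induction N generalizing U with
  | zero => exact hrec.exists_iterate_mem hU
  | succ N ih =>
    obtain ⟨n, hNn, hnU, hn⟩ :=
      ih (inter_mem hU (compl_singleton_mem_nhds (hnp (N + 1) N.succ_pos).symm))
    have : n ≠ N + 1 := fun h => hn (h ▸ rfl)
    exact ⟨n, by omega, hnU⟩

theorem SUnimodal.c_mem_RDom (hf : SUnimodal f c) (hrec : RecurrentPt f c) {x : ℝ}
    (hx : x ∈ Icc (0 : ℝ) 1) (hxc : x ≠ c) : c ∈ RDom f c x :=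
  ⟨mem_of_mem_nhds (hf.Vv_mem_nhds hx hxc), hrec.exists_iterate_mem (hf.Vv_mem_nhds hx hxc)⟩

theorem SUnimodal.iterate_notMem_niceSet (hf : SUnimodal f c) (hrec : RecurrentPt f c)
    (hnp : ∀ n : ℕ, 1 ≤ n → f^[n] c ≠ c) (k : ℕ) : f^[k] c ∉ NiceSet f c := by
  intro hnice
  obtain ⟨n, hkn, hn⟩ := hrec.exists_gt_iterate_mem hnp k (hf.Vv_mem_nhds hnice.1 hnice.2.1)
  refine hnice.2.2 (n - k) (by omega) ?_
  rwa [← iterate_add_apply, Nat.sub_add_cancel hkn.le]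

end Recurrence

-- `q 0 = 0` is a junk value: the sequence is indexed from `1`.
noncomputable def closestApproachTime (f : ℝ → ℝ) (c : ℝ) : ℕ → ℕ
  | 0 => 0
  | 1 => 1
  | n + 2 => firstTime f c (f^[closestApproachTime f c (n + 1)] c) c

theorem closestApproachTime_pos {f : ℝ → ℝ} {c : ℝ} (hf : SUnimodal f c)
    (hrec : RecurrentPt f c) (hnp : ∀ n : ℕ, 1 ≤ n → f^[n] c ≠ c) :
    ∀ {n : ℕ}, 1 ≤ n → 1 ≤ closestApproachTime f c n
  | 1, _ => le_rfl
  | n + 2, _ => (firstTime_spec (hf.c_mem_RDom hrec (hf.iterate_mem_Icc _)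
      (hnp _ (closestApproachTime_pos hf hrec hnp n.succ_pos)))).1

namespace SUnimodal

variable {f : ℝ → ℝ} {c : ℝ}

theorem sSup_mem_niceSet (hf : SUnimodal f c) {S : Set ℝ} (hS : S ⊆ NiceSet f c ∩ Iio c)
    (hne : S.Nonempty) (hSc : sSup S < c) : sSup S ∈ NiceSet f c := by
  have hbdd : BddAbove S := ⟨c, fun y hy => (hS hy).2.le⟩
  have hSI : S ⊆ Icc 0 1 := fun y hy => (hS hy).1.1
  obtain ⟨y₀, hy₀⟩ := hne
  have hx : sSup S ∈ Icc (0 : ℝ) 1 :=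
    ⟨(hSI hy₀).1.trans (le_csSup hbdd hy₀), hSc.le.trans hf.c_mem.2.le⟩
  refine ⟨hx, hSc.ne, fun k hk hkV => ?_⟩
  have := mem_closure_iff_nhdsWithin_neBot.1 (csSup_mem_closure ⟨y₀, hy₀⟩ hbdd)
  have hnear : ∀ᶠ y in 𝓝[Icc 0 1] sSup S, f^[k] y ∈ Vv f c (sSup S) :=
    (hf.iterate_continuousOn k _ hx).preimage_mem_nhdsWithin (isOpen_Vv.mem_nhds hkV)
  have hnearS : ∀ᶠ y in 𝓝[S] sSup S, f^[k] y ∈ Vv f c (sSup S) := nhdsWithin_mono _ hSI hnear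
  obtain ⟨y, hyV, hyS⟩ := (hnearS.and self_mem_nhdsWithin).exists
  have hfy : f y ≤ f (sSup S) :=
    hf.mono.monotoneOn ⟨(hSI hyS).1, (hS hyS).2.le⟩ ⟨hx.1, hSc.le⟩ (le_csSup hbdd hyS)
  exact (hS hyS).1.2.2 k hk (hf.Vv_subset_Vv (hSI hyS) (hS hyS).2.ne hx hSc.ne hfy hyV)

theorem sSup_niceGap_spec (hf : SUnimodal f c) {u v : ℝ} (hu : u ∈ Icc (0 : ℝ) 1) (huc : u ≠ c)
    (hv : v ∈ Icc (0 : ℝ) 1) (hvc : v ≠ c) (hv_nice : v ∉ NiceSet f c) {A : Set ℝ}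
    (hA : A = (Vv f c u \ Vv f c v) ∩ NiceSet f c ∩ Ico 0 c) (hne : A.Nonempty) :
    sSup A ∈ A ∧ sSup A ∈ NiceSet f c ∧ f u < f (sSup A) ∧ f (sSup A) < f v := by
  subst hA
  obtain ⟨y₀, hy₀⟩ := hne
  have hbdd : BddAbove ((Vv f c u \ Vv f c v) ∩ NiceSet f c ∩ Ico 0 c) :=
    ⟨c, fun y hy => hy.2.2.le⟩
  set x := sSup ((Vv f c u \ Vv f c v) ∩ NiceSet f c ∩ Ico 0 c) with hx_def
  have hx_v : x ∉ Vv f c v :=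
    closure_minimal (fun y hy => hy.1.1.2) isOpen_Vv.isClosed_compl
      (csSup_mem_closure ⟨y₀, hy₀⟩ hbdd)
  have hxc : x < c := by
    refine (csSup_le ⟨y₀, hy₀⟩ fun y hy => hy.2.2.le).lt_of_ne fun h => hx_v ?_
    rw [hx_def, h]
    exact mem_of_mem_nhds (hf.Vv_mem_nhds hv hvc)
  have hy₀x : y₀ ≤ x := le_csSup hbdd hy₀
  have hx : x ∈ Icc (0 : ℝ) 1 := ⟨hy₀.2.1.trans hy₀x, hxc.le.trans hf.c_mem.2.le⟩
  have hx_nice : x ∈ NiceSet f c :=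
    hf.sSup_mem_niceSet (fun y hy => ⟨hy.1.2, hy.2.2⟩) ⟨y₀, hy₀⟩ hxc
  have hfu : f u < f x := (hf.Vv_eq hu huc ▸ hy₀.1.1.1).2.trans_le
    (hf.mono.monotoneOn ⟨hy₀.2.1, hy₀.2.2.le⟩ ⟨hx.1, hxc.le⟩ hy₀x)
  have hfv : f x < f v := (not_lt.1 fun h => hx_v (hf.Vv_eq hv hvc ▸ ⟨hx, h⟩)).lt_of_ne
    fun h => hv_nice (hf.mem_niceSet_of_apply_eq hx_nice hv hvc h.symm)
  exact ⟨⟨⟨⟨hf.Vv_eq hu huc ▸ ⟨hx, hfu⟩, hx_v⟩, hx_nice⟩, hx.1, hxc⟩, hx_nice, hfu, hfv⟩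

end SUnimodal

/-- **Closest approach construction.** Let `f` be an S-unimodal map whose critical point
`c` is recurrent and not periodic, and write `c_t = f^[t] c`. The sequence of closest
approach times `q 1 = 1`, `q (n+1) = min {t : c_t ∈ V (c_(q n))}` is well defined, and
whenever the set `A = (V (c_(q (n-1))) \ V (c_(q n))) ∩ 𝒩 ∩ [0,c)` is nonempty its
supremum `x n = sSup A` is attained (the points `c_(q n)` are not nice), `x n` is nice,
`f^[i] c ∉ V (x n)` for `1 ≤ i < q n` while `f^[q n] c ∈ V (x n)` and
`V (c_(q n)) ⊆ V (x n)`; consequently `R_(x n)` restricted to the central domain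
`U (x n)` is `f^[q n]`. -/
theorem closest_approach_sequence (f : ℝ → ℝ) (c : ℝ)
    (hf : SUnimodal f c) (hrec : RecurrentPt f c)
    (hnp : ∀ n : ℕ, 1 ≤ n → f^[n] c ≠ c) :
    ∃ q : ℕ → ℕ, q 1 = 1 ∧
      (∀ n : ℕ, 1 ≤ n →
        ({t : ℕ | 1 ≤ t ∧ f^[t] c ∈ Vv f c (f^[q n] c)}).Nonempty ∧
        q (n + 1) = sInf {t : ℕ | 1 ≤ t ∧ f^[t] c ∈ Vv f c (f^[q n] c)}) ∧
      ∀ n : ℕ, 2 ≤ n → ∀ A : Set ℝ,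
        A = (Vv f c (f^[q (n - 1)] c) \ Vv f c (f^[q n] c)) ∩ NiceSet f c ∩ Ico 0 c →
        A.Nonempty →
        f^[q n] c ∉ NiceSet f c ∧
        sSup A ∈ A ∧
        sSup A ∈ NiceSet f c ∧
        (∀ i : ℕ, 1 ≤ i → i < q n → f^[i] c ∉ Vv f c (sSup A)) ∧
        f^[q n] c ∈ Vv f c (sSup A) ∧
        Vv f c (f^[q n] c) ⊆ Vv f c (sSup A) ∧
        ∀ z ∈ Uc f c (sSup A), firstTime f c (sSup A) z = q n := by
  refine ⟨closestApproachTime f c, rfl, fun n hn => ?_, fun n hn A hA hne => ?_⟩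
  · obtain ⟨k, rfl⟩ := Nat.exists_eq_add_of_le' hn
    exact ⟨(hf.c_mem_RDom hrec (hf.iterate_mem_Icc _)
      (hnp _ (closestApproachTime_pos hf hrec hnp hn))).2, rfl⟩
  obtain ⟨k, rfl⟩ : ∃ k, n = k + 2 := ⟨n - 2, by omega⟩
  set p := closestApproachTime f c (k + 1)
  set m := closestApproachTime f c (k + 2)
  have hp := hnp p (closestApproachTime_pos hf hrec hnp k.succ_pos)
  have hcR : c ∈ RDom f c (f^[p] c) := hf.c_mem_RDom hrec (hf.iterate_mem_Icc p) hp
  obtain ⟨hm, hmV⟩ : 1 ≤ m ∧ f^[m] c ∈ Vv f c (f^[p] c) := firstTime_spec hcR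
  obtain ⟨hxA, hx, hpx, hxm⟩ := hf.sSup_niceGap_spec (hf.iterate_mem_Icc p) hp (hf.iterate_mem_Icc m)
    (hnp m hm) (hf.iterate_notMem_niceSet hrec hnp m) hA hne
  have hVx : Vv f c (sSup A) ⊆ Vv f c (f^[p] c) :=
    hf.Vv_subset_Vv (hf.iterate_mem_Icc p) hp hx.1 hx.2.1 hpx.le
  have hmx : f^[m] c ∈ Vv f c (sSup A) := hf.Vv_eq hx.1 hx.2.1 ▸ ⟨hf.iterate_mem_Icc m, hxm⟩
  have hbefore (i : ℕ) (hi : 1 ≤ i) (him : i < m) : f^[i] c ∉ Vv f c (sSup A) :=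
    fun hiV => (firstTime_le hi (hVx hiV)).not_gt him
  have hcRx : c ∈ RDom f c (sSup A) := ⟨mem_of_mem_nhds (hf.Vv_mem_nhds hx.1 hx.2.1), m, hm, hmx⟩
  refine ⟨hf.iterate_notMem_niceSet hrec hnp m, hxA, hx, hbefore, hmx,
    hf.Vv_subset_Vv hx.1 hx.2.1 (hf.iterate_mem_Icc m) (hnp m hm) hxm.le, fun z hz => ?_⟩
  rw [hf.firstTime_eq_of_mem_connectedComponentIn hx hz (mem_connectedComponentIn hcRx)]
  exact firstTime_eq hm hmx hbefore
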